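/- Let K₁ and K₂ be (G,P)-graphs for a group G hyperbolic relative to P, and let H ≤ G. If there exists a nonempty connected quasi-isometrically embedded H-invariant subgraph of K₁ with finitely many H-orbits of edges, then such a subgraph also exists in K₂. That is, relative quasiconvexity (Definition Q-0) is independent of the choice of (G,P)-graph. -/

import Mathlib

open SimpleGraph

universe u v

variable {V : Type u} {G : Type v}

/-- A graph is fine if each edge lies in only finitely many circuits (embedded
cycles) of length `n`, for every `n`. -/
def Fine (K : SimpleGraph V) : Prop :=
  ∀ (n : ℕ) (u w : V), K.Adj u w →
    {c : K.Walk u u | c.IsCycle ∧ c.length = n ∧ s(u, w) ∈ c.edges}.Finite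

/-- An action of `G` by permutations of `V` preserves the graph `K`. -/
def ActsOn [Group G] (φ : G →* Equiv.Perm V) (K : SimpleGraph V) : Prop :=
  ∀ (g : G) (u w : V), K.Adj u w → K.Adj (φ g u) (φ g w)

/-- The stabilizer of a vertex. -/
def stab [Group G] (φ : G →* Equiv.Perm V) (x : V) : Subgroup G where
  carrier := {g | φ g x = x}
  one_mem' := by simp
  mul_mem' := by
    intro a b ha hb
    simp only [Set.mem_setOf_eq, map_mul, Equiv.Perm.mul_apply] at *
    rw [hb, ha]
  inv_mem' := by
    intro a ha
    simp only [Set.mem_setOf_eq, map_inv] at *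
    conv_lhs => rw [← ha]
    simp

/-- The conjugate subgroup `g P g⁻¹`. -/
def conjSub [Group G] (g : G) (P : Subgroup G) : Subgroup G :=
  Subgroup.map (MulAut.conj g).toMonoidHom P

/-- All edge stabilizers are finite (we use pointwise stabilizers of the two
endpoints; the actions considered are without inversions). -/
def FiniteEdgeStabs [Group G] (φ : G →* Equiv.Perm V) (K : SimpleGraph V) : Prop :=
  ∀ u w : V, K.Adj u w → ((stab φ u ⊓ stab φ w : Subgroup G) : Set G).Finite

/-- There are finitely many `G`-orbits of edges. -/
def FinEdgeOrbits [Group G] (φ : G →* Equiv.Perm V) (K : SimpleGraph V) : Prop :=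
  ∃ F : Set (V × V), F.Finite ∧
    ∀ u w : V, K.Adj u w → ∃ g : G, ∃ p ∈ F, φ g p.1 = u ∧ φ g p.2 = w

/-- Gromov hyperbolicity of the path metric of a graph (four point condition). -/
def Hyperbolic (K : SimpleGraph V) : Prop :=
  ∃ δ : ℝ, ∀ x y z t : V,
    (K.dist x y : ℝ) + (K.dist z t : ℝ) ≤
      max ((K.dist x z : ℝ) + (K.dist y t : ℝ)) ((K.dist x t : ℝ) + (K.dist y z : ℝ)) + δ

/-- `K` is a `(G, P)`-graph witnessing that `G` is hyperbolic relative to the finite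
collection `Ps` of subgroups: `K` is a connected fine hyperbolic graph, `G` acts
on it without inversions with finite edge stabilizers and finitely many orbits of
edges, and `Ps` is a set of representatives of the distinct conjugacy classes of
vertex stabilizers, with every infinite vertex stabilizer represented. -/
structure IsGPGraph [Group G] (φ : G →* Equiv.Perm V) (Ps : Set (Subgroup G))
    (K : SimpleGraph V) : Prop where
  finP : Ps.Finite
  conn : K.Connected
  fine : Fine K
  hyp : Hyperbolic K
  acts : ActsOn φ K
  noInv : ∀ (g : G) (u w : V), K.Adj u w → φ g u = w → φ g w ≠ u
  finStabs : FiniteEdgeStabs φ K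
  finOrbits : FinEdgeOrbits φ K
  parab : ∀ x : V, ¬ ((stab φ x : Set G)).Finite →
    ∃ P ∈ Ps, ∃ g : G, stab φ x = conjSub g P
  reps : ∀ P ∈ Ps, ∃ x : V, stab φ x = P
  distinct : ∀ P ∈ Ps, ∀ Q ∈ Ps, (∃ g : G, conjSub g P = Q) → P = Q

/-- Definition (Q-0): `H` is relatively quasiconvex with respect to the
`(G,Ps)`-graph `K` if there is a nonempty connected `H`-invariant subgraph `L`
of `K`, quasi-isometrically embedded in the path metric, with finitely many
`H`-orbits of edges. -/
def QC0 [Group G] (φ : G →* Equiv.Perm V) (K : SimpleGraph V)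
    (H : Subgroup G) : Prop :=
  ∃ L : K.Subgraph, L.verts.Nonempty ∧ L.coe.Connected ∧
    (∀ g ∈ H, (∀ x ∈ L.verts, φ g x ∈ L.verts) ∧
      ∀ u w : V, L.Adj u w → L.Adj (φ g u) (φ g w)) ∧
    (∃ F : Set (V × V), F.Finite ∧
      ∀ u w : V, L.Adj u w → ∃ g ∈ H, ∃ p ∈ F, φ g p.1 = u ∧ φ g p.2 = w) ∧
    (∃ l e : ℝ, 1 ≤ l ∧ 0 ≤ e ∧ ∀ u w : L.verts,
      (K.dist u.1 w.1 : ℝ) ≤ l * (L.coe.dist u w : ℝ) + e ∧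
      (L.coe.dist u w : ℝ) ≤ l * (K.dist u.1 w.1 : ℝ) + e)

/-!
Take the Q-0 subgraph `L₁ ⊆ K₁`. A vertex stabilizer of one graph is either finite or conjugate
to some `P ∈ Ps`, hence fixes a vertex of the other graph; either way it has a finite orbit there.
This gives a coarsely `G`-equivariant map `ψ : V₂ → V₁`, Lipschitz because `K₂` has finitely many
edge orbits, and, for every vertex `v` of `L₁`, a finite `H`-equivariant set of lifts of `v` to
`V₂`. Pairs of lifts of equal or adjacent vertices of `L₁` fall into finitely many `H`-orbits, so
the `H`-translates of walks joining representative pairs form a subgraph `L₂` of `K₂` with finitely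
many `H`-orbits of edges. Walks in `L₁` lift to walks in `L₂` of comparable length, while `ψ`
pushes `K₂`-distances between lifts back to `K₁`, where `L₁` is quasi-isometrically embedded; so
`L₂` is connected and quasi-isometrically embedded.
-/

namespace SimpleGraph

variable {W : Type*} {A : SimpleGraph V} {B : SimpleGraph W}

variable (B) in
lemma edist_triangle4 (a b c d : W) : B.edist a d ≤ B.edist a b + B.edist b c + B.edist c d :=
  calc B.edist a d ≤ B.edist a c + B.edist c d := B.edist_triangle
    _ ≤ B.edist a b + B.edist b c + B.edist c d := by gcongr; exact B.edist_triangle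

lemma Connected.coe_dist_eq_edist (hB : B.Connected) (a b : W) :
    (B.dist a b : ℕ∞) = B.edist a b :=
  (hB.preconnected a b).coe_dist_eq_edist

lemma Hom.edist_le (f : A →g B) (a b : V) : B.edist (f a) (f b) ≤ A.edist a b := by
  by_cases hab : A.Reachable a b
  · obtain ⟨p, hp⟩ := hab.exists_walk_length_eq_edist
    simpa [hp] using B.edist_le (p.map f)
  · simp [edist_eq_top_of_not_reachable hab]

lemma Connected.exists_forall_edist_le {α : Type*} (hB : B.Connected) {s : Set α}
    (hs : s.Finite) (f g : α → W) : ∃ D : ℕ, ∀ a ∈ s, B.edist (f a) (g a) ≤ D := by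
  obtain ⟨D, hD⟩ := (hs.image fun a => B.dist (f a) (g a)).bddAbove
  refine ⟨D, fun a ha => ?_⟩
  rw [← hB.coe_dist_eq_edist]
  exact_mod_cast hD ⟨a, ha, rfl⟩

lemma edist_le_mul_length_of_adj (f : V → W) (C : ℕ)
    (hf : ∀ a b, A.Adj a b → B.edist (f a) (f b) ≤ C) {a b : V} (p : A.Walk a b) :
    B.edist (f a) (f b) ≤ C * p.length := by
  induction p with
  | nil => simp
  | @cons a c b hac p ih =>
    calc B.edist (f a) (f b) ≤ B.edist (f a) (f c) + B.edist (f c) (f b) := B.edist_triangle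
      _ ≤ C + C * p.length := add_le_add (hf a c hac) ih
      _ = C * (p.cons hac).length := by push_cast [Walk.length_cons]; ring

lemma Reachable.edist_le_mul_edist_of_adj (f : V → W) (C : ℕ)
    (hf : ∀ a b, A.Adj a b → B.edist (f a) (f b) ≤ C) {a b : V} (hab : A.Reachable a b) :
    B.edist (f a) (f b) ≤ C * A.edist a b := by
  obtain ⟨p, hp⟩ := hab.exists_walk_length_eq_edist
  simpa [hp] using edist_le_mul_length_of_adj f C hf p

lemma Connected.of_edist_le [Nonempty W] (hA : A.Connected) {a b : ℕ}
    (h : ∀ u w : W, ∃ x y : V, B.edist u w ≤ a + b * A.edist x y) : B.Connected := by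
  refine { preconnected := fun u w => ?_ }
  obtain ⟨x, y, hxy⟩ := h u w
  refine reachable_of_edist_ne_top (ne_top_of_le_ne_top ?_ hxy)
  rw [← hA.coe_dist_eq_edist]
  exact_mod_cast ENat.natCast_ne_top _

namespace Subgraph

variable {K : SimpleGraph V} {L : K.Subgraph}

lemma edist_le_coe_edist (a b : L.verts) : K.edist a b ≤ L.coe.edist a b :=
  L.hom.edist_le a b

lemma coe_edist_le_length {a b : V} (p : K.Walk a b) (hp : p.toSubgraph ≤ L)
    (ha : a ∈ L.verts) (hb : b ∈ L.verts) : L.coe.edist ⟨a, ha⟩ ⟨b, hb⟩ ≤ p.length := by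
  have hlen : (p.mapToSubgraph.map (inclusion hp)).length = p.length := by
    rw [Walk.length_map, ← Walk.length_map p.toSubgraph.hom, Walk.map_mapToSubgraph_hom]
    rfl
  exact hlen ▸ L.coe.edist_le (p.mapToSubgraph.map (inclusion hp))

end Subgraph

end SimpleGraph

section Action

variable [Group G] {φ : G →* Equiv.Perm V} {K : SimpleGraph V}

def ActsOn.hom (hK : ActsOn φ K) (g : G) : K →g K :=
  ⟨φ g, fun hab => hK g _ _ hab⟩

@[simp] lemma ActsOn.hom_apply (hK : ActsOn φ K) (g : G) (x : V) : hK.hom g x = φ g x := rfl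

lemma ActsOn.edist_eq (hK : ActsOn φ K) (g : G) (a b : V) : K.edist (φ g a) (φ g b) = K.edist a b :=
  le_antisymm ((hK.hom g).edist_le a b) (by simpa using (hK.hom g⁻¹).edist_le (φ g a) (φ g b))

lemma stab_apply (φ : G →* Equiv.Perm V) (g : G) (x : V) :
    stab φ (φ g x) = conjSub g (stab φ x) := by
  ext t
  change φ t (φ g x) = φ g x ↔ ∃ s, φ s x = x ∧ g * s * g⁻¹ = t
  constructor
  · intro ht
    exact ⟨g⁻¹ * t * g, by simp [ht], by group⟩
  · rintro ⟨s, hs, rfl⟩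
    simp [hs]

lemma exists_orbit_transversal (φ : G →* Equiv.Perm V) :
    ∃ (z : V → V) (k : V → G), (∀ x, φ (k x) (z x) = x) ∧ ∀ g x, z (φ g x) = z x := by
  let orbit : V → Set V := fun x => Set.range fun g => φ g x
  have orbit_apply : ∀ g x, orbit (φ g x) = orbit x := fun g x => by
    ext y
    constructor
    · rintro ⟨h, rfl⟩
      exact ⟨h * g, by simp⟩
    · rintro ⟨h, rfl⟩
      exact ⟨h * g⁻¹, by simp⟩
  have hmem : ∀ x, ∃ k : G, φ k (@Classical.epsilon V ⟨x⟩ (· ∈ orbit x)) = x := fun x => by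
    obtain ⟨g, hg⟩ := @Classical.epsilon_spec V (· ∈ orbit x) ⟨x, 1, by simp⟩
    exact ⟨g⁻¹, by rw [← hg]; simp⟩
  choose k hk using hmem
  exact ⟨_, k, hk, fun g x => by simp only [orbit_apply]⟩

end Action

section TwoActions

variable {V₁ V₂ : Type*} [Group G] {φ₁ : G →* Equiv.Perm V₁} {φ₂ : G →* Equiv.Perm V₂}
  {K₁ : SimpleGraph V₁} {K₂ : SimpleGraph V₂}

def StabsHaveFiniteOrbits (φ₁ : G →* Equiv.Perm V₁) (φ₂ : G →* Equiv.Perm V₂) : Prop :=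
  ∀ x : V₁, ∃ y : V₂, ((fun t => φ₂ t y) '' (stab φ₁ x : Set G)).Finite

lemma IsGPGraph.stabsHaveFiniteOrbits {Ps : Set (Subgroup G)} (hK₁ : IsGPGraph φ₁ Ps K₁)
    (hK₂ : IsGPGraph φ₂ Ps K₂) : StabsHaveFiniteOrbits φ₁ φ₂ := by
  intro x
  by_cases hfin : (stab φ₁ x : Set G).Finite
  · exact ⟨hK₂.conn.nonempty.some, hfin.image _⟩
  obtain ⟨P, hP, g, hx⟩ := hK₁.parab x hfin
  obtain ⟨y, rfl⟩ := hK₂.reps P hP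
  refine ⟨φ₂ g y, (Set.finite_singleton (φ₂ g y)).subset ?_⟩
  rintro _ ⟨t, ht, rfl⟩
  rw [SetLike.mem_coe, hx, ← stab_apply] at ht
  exact ht

def CoarselyEquivariant (φ₁ : G →* Equiv.Perm V₁) (φ₂ : G →* Equiv.Perm V₂)
    (K₁ : SimpleGraph V₁) (ψ : V₂ → V₁) : Prop :=
  ∀ ζ : V₂, ∃ D : ℕ, ∀ g : G, K₁.edist (ψ (φ₂ g ζ)) (φ₁ g (ψ ζ)) ≤ D

lemma exists_coarselyEquivariant (hK₁ : K₁.Connected) (hacts : ActsOn φ₁ K₁)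
    (hstab : StabsHaveFiniteOrbits φ₂ φ₁) : ∃ ψ : V₂ → V₁, CoarselyEquivariant φ₁ φ₂ K₁ ψ := by
  choose x hx using hstab
  have hdisp : ∀ ζ, ∃ D : ℕ, ∀ t ∈ stab φ₂ ζ, K₁.edist (φ₁ t (x ζ)) (x ζ) ≤ D := fun ζ =>
    (hK₁.exists_forall_edist_le (hx ζ) id fun _ => x ζ).imp fun _ hD t ht => hD _ ⟨t, ht, rfl⟩
  choose D hD using hdisp
  obtain ⟨z, k, hk, hz⟩ := exists_orbit_transversal φ₂
  -- Both `k (g • ζ)` and `g * k ζ` carry `z ζ` to `g • ζ`, so they differ by an element of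
  -- `stab φ₂ (z ζ)`, which moves `x (z ζ)` by at most `D (z ζ)`.
  refine ⟨fun ξ => φ₁ (k ξ) (x (z ξ)), fun ζ => ⟨D (z ζ), fun g => ?_⟩⟩
  have hmem : (g * k ζ)⁻¹ * k (φ₂ g ζ) ∈ stab φ₂ (z ζ) := by
    have hgζ := hk (φ₂ g ζ)
    rw [hz] at hgζ
    change φ₂ _ (z ζ) = z ζ
    rw [map_mul, Equiv.Perm.mul_apply, hgζ, map_inv, Equiv.Perm.inv_eq_iff_eq, map_mul,
      Equiv.Perm.mul_apply, hk]
  calc K₁.edist (φ₁ (k (φ₂ g ζ)) (x (z (φ₂ g ζ)))) (φ₁ g (φ₁ (k ζ) (x (z ζ))))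
      = K₁.edist (φ₁ ((g * k ζ)⁻¹ * k (φ₂ g ζ)) (x (z ζ))) (x (z ζ)) := by
        rw [hz, ← hacts.edist_eq (g * k ζ)⁻¹]
        simp
    _ ≤ D (z ζ) := hD _ _ hmem

lemma CoarselyEquivariant.exists_edist_le_of_adj {ψ : V₂ → V₁}
    (hψ : CoarselyEquivariant φ₁ φ₂ K₁ ψ) (hK₁ : K₁.Connected) (hacts : ActsOn φ₁ K₁)
    (horb : FinEdgeOrbits φ₂ K₂) : ∃ C : ℕ, ∀ a b, K₂.Adj a b → K₁.edist (ψ a) (ψ b) ≤ C := by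
  choose D hD using hψ
  obtain ⟨F, hF, hFcov⟩ := horb
  obtain ⟨C, hC⟩ := hK₁.exists_forall_edist_le hF (ψ ∘ Prod.fst) (ψ ∘ Prod.snd)
  obtain ⟨B, hB⟩ := (hF.image fun p => D p.1 + D p.2).bddAbove
  refine ⟨B + C, fun a b hab => ?_⟩
  obtain ⟨g, p, hp, rfl, rfl⟩ := hFcov a b hab
  have hBp : D p.1 + D p.2 ≤ B := hB ⟨p, hp, rfl⟩
  calc K₁.edist (ψ (φ₂ g p.1)) (ψ (φ₂ g p.2))
      ≤ K₁.edist (ψ (φ₂ g p.1)) (φ₁ g (ψ p.1)) + K₁.edist (φ₁ g (ψ p.1)) (φ₁ g (ψ p.2)) +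
          K₁.edist (φ₁ g (ψ p.2)) (ψ (φ₂ g p.2)) :=
        K₁.edist_triangle4 _ _ _ _
    _ ≤ D p.1 + C + D p.2 := by
        rw [hacts.edist_eq, K₁.edist_comm (u := φ₁ g _)]
        gcongr
        exacts [hD _ _, hC p hp, hD _ _]
    _ ≤ (B + C : ℕ) := by push_cast; rw [add_right_comm]; gcongr; exact_mod_cast hBp

end TwoActions

lemma SimpleGraph.Walk.toSubgraph_takeUntil_le [DecidableEq V] {K : SimpleGraph V} {u v w : V}
    (p : K.Walk u v) (h : w ∈ p.support) : (p.takeUntil w h).toSubgraph ≤ p.toSubgraph := by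
  conv_rhs => rw [← p.take_spec h, Walk.toSubgraph_append]
  exact le_sup_left

section OrbitHull

variable [Group G] {φ : G →* Equiv.Perm V} {K : SimpleGraph V} {H : Subgroup G}

def IsInvariantSubgraph (φ : G →* Equiv.Perm V) (H : Subgroup G) (L : K.Subgraph) : Prop :=
  ∀ g ∈ H, (∀ x ∈ L.verts, φ g x ∈ L.verts) ∧ ∀ u w : V, L.Adj u w → L.Adj (φ g u) (φ g w)

def HasFiniteOrbits (φ : G →* Equiv.Perm V) (H : Subgroup G) (r : V → V → Prop) : Prop :=
  ∃ F : Set (V × V), F.Finite ∧ ∀ u w : V, r u w → ∃ g ∈ H, ∃ p ∈ F, φ g p.1 = u ∧ φ g p.2 = w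

def ActsOn.orbitHull (hK : ActsOn φ K) (H : Subgroup G) (S : K.Subgraph) : K.Subgraph :=
  ⨆ h : H, S.map (hK.hom h)

variable (hK : ActsOn φ K) {S : K.Subgraph}

lemma ActsOn.map_le_orbitHull {h : G} (hh : h ∈ H) : S.map (hK.hom h) ≤ hK.orbitHull H S :=
  le_iSup (fun h : H => S.map (hK.hom h)) ⟨h, hh⟩

lemma ActsOn.mem_orbitHull_verts {x : V} :
    x ∈ (hK.orbitHull H S).verts ↔ ∃ h ∈ H, ∃ a ∈ S.verts, φ h a = x := by
  simp [ActsOn.orbitHull, Subgraph.verts_iSup]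

lemma ActsOn.orbitHull_adj {x y : V} :
    (hK.orbitHull H S).Adj x y ↔ ∃ h ∈ H, ∃ a b, S.Adj a b ∧ φ h a = x ∧ φ h b = y := by
  simp [ActsOn.orbitHull, Relation.Map]

lemma ActsOn.isInvariantSubgraph_orbitHull : IsInvariantSubgraph φ H (hK.orbitHull H S) := by
  intro g hg
  constructor
  · intro x hx
    obtain ⟨h, hh, a, ha, rfl⟩ := (hK.mem_orbitHull_verts).1 hx
    exact (hK.mem_orbitHull_verts).2 ⟨g * h, mul_mem hg hh, a, ha, by simp⟩
  · intro u w huw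
    obtain ⟨h, hh, a, b, hab, rfl, rfl⟩ := (hK.orbitHull_adj).1 huw
    exact (hK.orbitHull_adj).2 ⟨g * h, mul_mem hg hh, a, b, hab, by simp, by simp⟩

lemma ActsOn.hasFiniteOrbits_orbitHull (hS : S.verts.Finite) :
    HasFiniteOrbits φ H (hK.orbitHull H S).Adj := by
  refine ⟨S.verts ×ˢ S.verts, hS.prod hS, fun u w huw => ?_⟩
  obtain ⟨h, hh, a, b, hab, rfl, rfl⟩ := (hK.orbitHull_adj).1 huw
  exact ⟨h, hh, (a, b), ⟨hab.fst_mem, hab.snd_mem⟩, rfl, rfl⟩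

lemma ActsOn.coe_edist_orbitHull_le {h : G} (hh : h ∈ H) {a b : V} (p : K.Walk a b)
    (hp : p.toSubgraph ≤ S) (ha : φ h a ∈ (hK.orbitHull H S).verts)
    (hb : φ h b ∈ (hK.orbitHull H S).verts) :
    (hK.orbitHull H S).coe.edist ⟨φ h a, ha⟩ ⟨φ h b, hb⟩ ≤ p.length := by
  have hle : (p.map (hK.hom h)).toSubgraph ≤ hK.orbitHull H S := by
    rw [Walk.toSubgraph_map]
    exact (Subgraph.map_mono hp).trans (hK.map_le_orbitHull hh)
  exact (Subgraph.coe_edist_le_length _ hle ha hb).trans_eq (by rw [Walk.length_map])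

end OrbitHull

section Cover

variable [Group G] {φ : G →* Equiv.Perm V} {K : SimpleGraph V} {H : Subgroup G}
  {L : K.Subgraph}

lemma IsInvariantSubgraph.adj_of_adj_apply (hinv : IsInvariantSubgraph φ H L) {g : G}
    (hg : g ∈ H) {u w : V} (h : L.Adj (φ g u) (φ g w)) : L.Adj u w := by
  simpa using (hinv g⁻¹ (inv_mem hg)).2 _ _ h

lemma exists_finite_orbit_cover (hL : L.coe.Connected) (hinv : IsInvariantSubgraph φ H L)
    (horb : HasFiniteOrbits φ H L.Adj) :
    ∃ R : Set V, R.Finite ∧ R ⊆ L.verts ∧ ∀ v ∈ L.verts, ∃ h ∈ H, ∃ r ∈ R, φ h r = v := by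
  obtain ⟨x₀⟩ := hL.nonempty
  obtain ⟨F, hF, hFcov⟩ := horb
  refine ⟨insert x₀.1 (L.verts ∩ Prod.fst '' F), ((hF.image _).inter_of_right _).insert _,
    Set.insert_subset x₀.2 Set.inter_subset_left, fun v hv => ?_⟩
  by_cases hvx : v = x₀.1
  · exact ⟨1, one_mem H, x₀.1, Set.mem_insert _ _, by simp [hvx]⟩
  obtain ⟨p⟩ := hL.preconnected ⟨v, hv⟩ x₀
  cases p with
  | nil => exact absurd rfl hvx
  | @cons _ c _ hadj _ =>
    obtain ⟨g, hg, q, hq, hq₁, hq₂⟩ := hFcov v c hadj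
    refine ⟨g, hg, q.1, Set.mem_insert_of_mem _ ⟨?_, q, hq, rfl⟩, hq₁⟩
    have hadj' : L.Adj (φ g q.1) (φ g q.2) := hq₁ ▸ hq₂ ▸ hadj
    exact (hinv.adj_of_adj_apply hg hadj').fst_mem

end Cover

section Lifts

variable {V₁ V₂ : Type*} [Group G] {φ₁ : G →* Equiv.Perm V₁} {φ₂ : G →* Equiv.Perm V₂}
  {K₁ : SimpleGraph V₁} {H : Subgroup G} {R : Set V₁}

def lifts (φ₁ : G →* Equiv.Perm V₁) (φ₂ : G →* Equiv.Perm V₂) (H : Subgroup G) (R : Set V₁)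
    (y : V₁ → V₂) (v : V₁) : Set V₂ :=
  {ξ | ∃ h ∈ H, ∃ r ∈ R, φ₁ h r = v ∧ φ₂ h (y r) = ξ}

variable {y : V₁ → V₂}

lemma apply_mem_lifts {g : G} (hg : g ∈ H) {v : V₁} {ξ : V₂}
    (hξ : ξ ∈ lifts φ₁ φ₂ H R y v) : φ₂ g ξ ∈ lifts φ₁ φ₂ H R y (φ₁ g v) := by
  obtain ⟨h, hh, r, hr, rfl, rfl⟩ := hξ
  exact ⟨g * h, mul_mem hg hh, r, hr, by simp, by simp⟩

lemma lifts_finite (hR : R.Finite)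
    (hy : ∀ r, ((fun t => φ₂ t (y r)) '' (stab φ₁ r : Set G)).Finite) (v : V₁) :
    (lifts φ₁ φ₂ H R y v).Finite := by
  have hsub : lifts φ₁ φ₂ H R y v ⊆ ⋃ r ∈ R, {ξ | ∃ h, φ₁ h r = v ∧ φ₂ h (y r) = ξ} := by
    rintro _ ⟨h, -, r, hr, hv, rfl⟩
    exact Set.mem_biUnion hr ⟨h, hv, rfl⟩
  refine (hR.biUnion fun r _ => ?_).subset hsub
  by_cases hv : ∃ h₀, φ₁ h₀ r = v
  · -- Any two elements carrying `r` to `v` differ by an element of `stab φ₁ r`.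
    obtain ⟨h₀, hh₀⟩ := hv
    refine ((hy r).image (φ₂ h₀)).subset ?_
    rintro _ ⟨h, hh, rfl⟩
    refine ⟨φ₂ (h₀⁻¹ * h) (y r), ⟨h₀⁻¹ * h, ?_, rfl⟩, by simp⟩
    change φ₁ (h₀⁻¹ * h) r = r
    simp [hh, ← hh₀]
  · refine Set.finite_empty.subset ?_
    rintro _ ⟨h, hh, -⟩
    exact hv ⟨h, hh⟩

lemma CoarselyEquivariant.exists_edist_le_of_mem_lifts {ψ : V₂ → V₁}
    (hψ : CoarselyEquivariant φ₁ φ₂ K₁ ψ) (hK₁ : K₁.Connected) (hacts : ActsOn φ₁ K₁)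
    (hR : R.Finite) : ∃ C : ℕ, ∀ v, ∀ ξ ∈ lifts φ₁ φ₂ H R y v, K₁.edist (ψ ξ) v ≤ C := by
  choose D hD using hψ
  obtain ⟨C, hC⟩ := hK₁.exists_forall_edist_le hR (ψ ∘ y) id
  obtain ⟨B, hB⟩ := (hR.image (D ∘ y)).bddAbove
  refine ⟨B + C, ?_⟩
  rintro _ _ ⟨h, -, r, hr, rfl, rfl⟩
  calc K₁.edist (ψ (φ₂ h (y r))) (φ₁ h r)
      ≤ K₁.edist (ψ (φ₂ h (y r))) (φ₁ h (ψ (y r))) + K₁.edist (φ₁ h (ψ (y r))) (φ₁ h r) :=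
        K₁.edist_triangle
    _ ≤ D (y r) + C := by
        rw [hacts.edist_eq]
        exact add_le_add (hD _ _) (hC r hr)
    _ ≤ (B + C : ℕ) := by
        push_cast
        gcongr
        exact_mod_cast hB ⟨r, hr, rfl⟩

-- The diagonal case `v = w` makes any two lifts of one vertex close in the subgraph built below.
def LiftRel (L : K₁.Subgraph) (Λ : V₁ → Set V₂) (ξ η : V₂) : Prop :=
  ∃ v ∈ L.verts, ∃ w, (v = w ∨ L.Adj v w) ∧ ξ ∈ Λ v ∧ η ∈ Λ w

lemma exists_finite_liftRel_reps {L : K₁.Subgraph} (hinv : IsInvariantSubgraph φ₁ H L)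
    (horb : HasFiniteOrbits φ₁ H L.Adj) (hR : R.Finite) (hRL : R ⊆ L.verts)
    (hcov : ∀ v ∈ L.verts, ∃ h ∈ H, ∃ r ∈ R, φ₁ h r = v) (Λ : V₁ → Set V₂)
    (hΛ : ∀ g ∈ H, ∀ v, ∀ ξ ∈ Λ v, φ₂ g ξ ∈ Λ (φ₁ g v)) (hΛfin : ∀ v, (Λ v).Finite) :
    ∃ Q : Set (V₂ × V₂), Q.Finite ∧ (∀ q ∈ Q, LiftRel L Λ q.1 q.2) ∧
      ∀ ξ η, LiftRel L Λ ξ η → ∃ h ∈ H, ∃ q ∈ Q, φ₂ h q.1 = ξ ∧ φ₂ h q.2 = η := by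
  have hΛinv : ∀ g ∈ H, ∀ v ξ, ξ ∈ Λ (φ₁ g v) → φ₂ g⁻¹ ξ ∈ Λ v := fun g hg v ξ hξ => by
    simpa using hΛ g⁻¹ (inv_mem hg) _ ξ hξ
  obtain ⟨F, hF, hFcov⟩ := horb
  let E := {p ∈ F | L.Adj p.1 p.2}
  refine ⟨(⋃ r ∈ R, Λ r ×ˢ Λ r) ∪ ⋃ p ∈ E, Λ p.1 ×ˢ Λ p.2,
    (hR.biUnion fun r _ => (hΛfin r).prod (hΛfin r)).union
      ((hF.subset (Set.sep_subset _ _)).biUnion fun p _ => (hΛfin p.1).prod (hΛfin p.2)),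
    ?_, ?_⟩
  · rintro q (hq | hq) <;> simp only [Set.mem_iUnion, Set.mem_prod] at hq
    · obtain ⟨r, hr, h₁, h₂⟩ := hq
      exact ⟨r, hRL hr, r, Or.inl rfl, h₁, h₂⟩
    · obtain ⟨p, ⟨-, hp⟩, h₁, h₂⟩ := hq
      exact ⟨p.1, hp.fst_mem, p.2, Or.inr hp, h₁, h₂⟩
  · rintro ξ η ⟨v, hv, w, rfl | hvw, hξ, hη⟩
    · obtain ⟨h, hh, r, hr, rfl⟩ := hcov v hv
      refine ⟨h, hh, (φ₂ h⁻¹ ξ, φ₂ h⁻¹ η), Or.inl ?_, by simp, by simp⟩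
      exact Set.mem_biUnion hr ⟨hΛinv h hh r ξ hξ, hΛinv h hh r η hη⟩
    · obtain ⟨g, hg, p, hp, rfl, rfl⟩ := hFcov v w hvw
      refine ⟨g, hg, (φ₂ g⁻¹ ξ, φ₂ g⁻¹ η), Or.inr ?_, by simp, by simp⟩
      exact Set.mem_biUnion (x := p) ⟨hp, hinv.adj_of_adj_apply hg hvw⟩
        ⟨hΛinv g hg p.1 ξ hξ, hΛinv g hg p.2 η hη⟩

end Lifts

section QuasiIsometry

variable {V₁ V₂ : Type*} {K₁ : SimpleGraph V₁} {K₂ : SimpleGraph V₂} {L₁ : K₁.Subgraph}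
  {L₂ : K₂.Subgraph}

lemma edist_bounds_of_quasiInverse (hK₂ : K₂.Connected) (hL₁ : L₁.coe.Connected)
    (Φ : L₁.verts → L₂.verts) (ψ : V₂ → V₁) {M N C C' : ℕ}
    (hΦ : ∀ a b, L₁.coe.Adj a b → L₂.coe.edist (Φ a) (Φ b) ≤ M)
    (hnear : ∀ u, ∃ v, L₂.coe.edist u (Φ v) ≤ N)
    (hψ : ∀ a b, K₂.Adj a b → K₁.edist (ψ a) (ψ b) ≤ C)
    (hψΦ : ∀ v, K₁.edist (ψ (Φ v)) v ≤ C') :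
    ∀ u w : L₂.verts, ∃ a b : L₁.verts, L₂.coe.edist u w ≤ ↑(2 * N) + M * L₁.coe.edist a b ∧
      K₁.edist a b ≤ ↑(2 * C' + 2 * C * N) + C * K₂.edist u w := by
  intro u w
  obtain ⟨a, ha⟩ := hnear u
  obtain ⟨b, hb⟩ := hnear w
  have hsub : ∀ u v : L₂.verts, K₂.edist u v ≤ L₂.coe.edist u v := Subgraph.edist_le_coe_edist
  refine ⟨a, b, ?_, ?_⟩
  · calc L₂.coe.edist u w
          ≤ L₂.coe.edist u (Φ a) + L₂.coe.edist (Φ a) (Φ b) + L₂.coe.edist (Φ b) w :=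
          L₂.coe.edist_triangle4 _ _ _ _
      _ ≤ N + M * L₁.coe.edist a b + N := by
          rw [L₂.coe.edist_comm (u := Φ b)]
          gcongr
          exact (hL₁.preconnected a b).edist_le_mul_edist_of_adj Φ M hΦ
      _ = ↑(2 * N) + M * L₁.coe.edist a b := by push_cast; ring
  · calc K₁.edist a b
          ≤ K₁.edist a (ψ (Φ a)) + K₁.edist (ψ (Φ a)) (ψ (Φ b)) + K₁.edist (ψ (Φ b)) b :=
          K₁.edist_triangle4 _ _ _ _
      _ ≤ C' + C * K₂.edist (Φ a) (Φ b) + C' := by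
          rw [K₁.edist_comm (u := a.1)]
          gcongr
          · exact hψΦ a
          · exact (hK₂.preconnected _ _).edist_le_mul_edist_of_adj ψ C hψ
          · exact hψΦ b
      _ ≤ C' + C * (N + K₂.edist u w + N) + C' := by
          gcongr
          calc K₂.edist (Φ a) (Φ b) ≤ K₂.edist (Φ a) u + K₂.edist u w + K₂.edist w (Φ b) :=
                K₂.edist_triangle4 _ _ _ _
            _ ≤ N + K₂.edist u w + N := by
                rw [K₂.edist_comm]
                gcongr
                exacts [(hsub _ _).trans ha, (hsub _ _).trans hb]
      _ = ↑(2 * C' + 2 * C * N) + C * K₂.edist u w := by push_cast; ring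

lemma exists_qi_constants (hK₁ : K₁.Connected) (hK₂ : K₂.Connected) (hL₁ : L₁.coe.Connected)
    (hL₂ : L₂.coe.Connected) {l₁ e₁ : ℝ} (hl₁ : 0 ≤ l₁) (he₁ : 0 ≤ e₁)
    (hqi : ∀ a b : L₁.verts, (L₁.coe.dist a b : ℝ) ≤ l₁ * K₁.dist a.1 b.1 + e₁) {A B C D : ℕ}
    (h : ∀ u w : L₂.verts, ∃ a b : L₁.verts, L₂.coe.edist u w ≤ A + B * L₁.coe.edist a b ∧
      K₁.edist a b ≤ C + D * K₂.edist u w) :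
    ∃ l e : ℝ, 1 ≤ l ∧ 0 ≤ e ∧ ∀ u w : L₂.verts,
      (K₂.dist u.1 w.1 : ℝ) ≤ l * L₂.coe.dist u w + e ∧
      (L₂.coe.dist u w : ℝ) ≤ l * K₂.dist u.1 w.1 + e := by
  have hBlD : 0 ≤ (B : ℝ) * l₁ * D := by positivity
  have he : 0 ≤ (A : ℝ) + B * (l₁ * C + e₁) := by positivity
  refine ⟨B * l₁ * D + 1, A + B * (l₁ * C + e₁), by linarith, he, fun u w => ?_⟩
  obtain ⟨a, b, h₁, h₂⟩ := h u w
  have hlow := Subgraph.edist_le_coe_edist u w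
  rw [← hL₂.coe_dist_eq_edist, ← hL₁.coe_dist_eq_edist] at h₁
  rw [← hK₁.coe_dist_eq_edist, ← hK₂.coe_dist_eq_edist] at h₂
  rw [← hL₂.coe_dist_eq_edist, ← hK₂.coe_dist_eq_edist] at hlow
  have h₁' : (L₂.coe.dist u w : ℝ) ≤ A + B * L₁.coe.dist a b := by exact_mod_cast h₁
  have h₂' : (K₁.dist a b : ℝ) ≤ C + D * K₂.dist u w := by exact_mod_cast h₂
  have hlow' : (K₂.dist u w : ℝ) ≤ L₂.coe.dist u w := by exact_mod_cast hlow
  constructor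
  · nlinarith [mul_nonneg hBlD (Nat.cast_nonneg' (L₂.coe.dist u w))]
  · calc (L₂.coe.dist u w : ℝ) ≤ A + B * (l₁ * K₁.dist a b + e₁) := by
          refine h₁'.trans ?_
          gcongr
          exact hqi a b
      _ ≤ A + B * (l₁ * (C + D * K₂.dist u w) + e₁) := by gcongr
      _ = B * l₁ * D * K₂.dist u w + (A + B * (l₁ * C + e₁)) := by ring
      _ ≤ (B * l₁ * D + 1) * K₂.dist u w + (A + B * (l₁ * C + e₁)) := by gcongr; linarith

end QuasiIsometry

section WalkHull

variable [Group G] {φ : G →* Equiv.Perm V} {K : SimpleGraph V} {H : Subgroup G}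
  {Q : Set (V × V)} {w : ∀ a b : V, K.Walk a b}

def ActsOn.walkHull (hK : ActsOn φ K) (H : Subgroup G) (Q : Set (V × V))
    (w : ∀ a b : V, K.Walk a b) : K.Subgraph :=
  hK.orbitHull H (⨆ q ∈ Q, (w q.1 q.2).toSubgraph)

variable (hK : ActsOn φ K)

lemma ActsOn.hasFiniteOrbits_walkHull (hQ : Q.Finite) :
    HasFiniteOrbits φ H (hK.walkHull H Q w).Adj := by
  refine hK.hasFiniteOrbits_orbitHull ?_
  simp only [Subgraph.verts_iSup, Walk.verts_toSubgraph]
  exact hQ.biUnion fun q _ => (w q.1 q.2).support.finite_toSet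

lemma ActsOn.apply_mem_walkHull_verts {h : G} (hh : h ∈ H) {q : V × V} (hq : q ∈ Q) {x : V}
    (hx : x ∈ (w q.1 q.2).support) : φ h x ∈ (hK.walkHull H Q w).verts :=
  hK.mem_orbitHull_verts.2 ⟨h, hh, x, by simpa [Subgraph.verts_iSup] using ⟨q.1, q.2, hq, hx⟩, rfl⟩

lemma ActsOn.edist_walkHull_le {h : G} (hh : h ∈ H) {q : V × V} (hq : q ∈ Q) {x : V}
    (hx : x ∈ (w q.1 q.2).support) (h₁ : φ h q.1 ∈ (hK.walkHull H Q w).verts)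
    (h₂ : φ h x ∈ (hK.walkHull H Q w).verts) :
    (hK.walkHull H Q w).coe.edist ⟨φ h q.1, h₁⟩ ⟨φ h x, h₂⟩ ≤ (w q.1 q.2).length := by
  classical
  refine (hK.coe_edist_orbitHull_le hh ((w q.1 q.2).takeUntil x hx) ?_ h₁ h₂).trans ?_
  · exact ((w q.1 q.2).toSubgraph_takeUntil_le hx).trans
      (le_iSup₂ (f := fun q (_ : q ∈ Q) => (w q.1 q.2).toSubgraph) q hq)
  · exact_mod_cast (w q.1 q.2).length_takeUntil_le_length hx

lemma ActsOn.exists_of_mem_walkHull_verts {x : V} (hx : x ∈ (hK.walkHull H Q w).verts) :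
    ∃ h ∈ H, ∃ q ∈ Q, ∃ a ∈ (w q.1 q.2).support, φ h a = x := by
  obtain ⟨h, hh, a, ha, rfl⟩ := hK.mem_orbitHull_verts.1 hx
  simp only [Subgraph.verts_iSup, Walk.verts_toSubgraph, Set.mem_iUnion] at ha
  obtain ⟨q, hq, ha⟩ := ha
  exact ⟨h, hh, q, hq, a, ha, rfl⟩

lemma ActsOn.exists_walkHull_edist_le {M : ℕ} (hM : ∀ q ∈ Q, (w q.1 q.2).length ≤ M)
    {r : V → V → Prop} (hQ : ∀ ξ η, r ξ η → ∃ h ∈ H, ∃ q ∈ Q, φ h q.1 = ξ ∧ φ h q.2 = η)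
    {ξ η : V} (hξη : r ξ η) : ∃ (hξ : ξ ∈ (hK.walkHull H Q w).verts)
      (hη : η ∈ (hK.walkHull H Q w).verts), (hK.walkHull H Q w).coe.edist ⟨ξ, hξ⟩ ⟨η, hη⟩ ≤ M := by
  obtain ⟨h, hh, q, hq, rfl, rfl⟩ := hQ ξ η hξη
  have h₁ := hK.apply_mem_walkHull_verts hh hq (w q.1 q.2).start_mem_support
  have h₂ := hK.apply_mem_walkHull_verts hh hq (w q.1 q.2).end_mem_support
  exact ⟨h₁, h₂, (hK.edist_walkHull_le hh hq (w q.1 q.2).end_mem_support h₁ h₂).trans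
    (by exact_mod_cast hM q hq)⟩

lemma ActsOn.exists_walkHull_edist_le_of_mem {M : ℕ} (hM : ∀ q ∈ Q, (w q.1 q.2).length ≤ M)
    (u : (hK.walkHull H Q w).verts) : ∃ h ∈ H, ∃ q ∈ Q,
      ∃ hq : φ h q.1 ∈ (hK.walkHull H Q w).verts, (hK.walkHull H Q w).coe.edist u ⟨_, hq⟩ ≤ M := by
  obtain ⟨h, hh, q, hq, x, hx, hu⟩ := hK.exists_of_mem_walkHull_verts u.2
  have h₁ := hK.apply_mem_walkHull_verts hh hq (w q.1 q.2).start_mem_support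
  refine ⟨h, hh, q, hq, h₁, ?_⟩
  obtain ⟨u, hu'⟩ := u
  subst hu
  rw [edist_comm]
  exact (hK.edist_walkHull_le hh hq hx h₁ hu').trans (by exact_mod_cast hM q hq)

end WalkHull

section Transfer

variable {V₁ V₂ : Type*} [Group G] {φ₁ : G →* Equiv.Perm V₁} {φ₂ : G →* Equiv.Perm V₂}
  {K₁ : SimpleGraph V₁} {K₂ : SimpleGraph V₂} {H : Subgroup G}

lemma qc0_of_quasiInverse (hK₁ : K₁.Connected) (hK₂ : K₂.Connected) (hacts₂ : ActsOn φ₂ K₂)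
    {L₁ : K₁.Subgraph} (hL₁ : L₁.coe.Connected) (hinv : IsInvariantSubgraph φ₁ H L₁)
    (horb : HasFiniteOrbits φ₁ H L₁.Adj) {l₁ e₁ : ℝ} (hl₁ : 0 ≤ l₁) (he₁ : 0 ≤ e₁)
    (hqi : ∀ a b : L₁.verts, (L₁.coe.dist a b : ℝ) ≤ l₁ * K₁.dist a.1 b.1 + e₁)
    (Λ : V₁ → Set V₂) (hΛ : ∀ g ∈ H, ∀ v, ∀ ξ ∈ Λ v, φ₂ g ξ ∈ Λ (φ₁ g v))
    (hΛfin : ∀ v, (Λ v).Finite) (hΛne : ∀ v ∈ L₁.verts, (Λ v).Nonempty)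
    (ψ : V₂ → V₁) {C C' : ℕ} (hψ : ∀ a b, K₂.Adj a b → K₁.edist (ψ a) (ψ b) ≤ C)
    (hψΛ : ∀ v, ∀ ξ ∈ Λ v, K₁.edist (ψ ξ) v ≤ C') : QC0 φ₂ K₂ H := by
  obtain ⟨R, hR, hRL, hcov⟩ := exists_finite_orbit_cover hL₁ hinv horb
  obtain ⟨Q, hQ, hQrel, hQcov⟩ := exists_finite_liftRel_reps hinv horb hR hRL hcov Λ hΛ hΛfin
  -- Any walks will do: only their lengths matter, and these are bounded over the finite `Q`.
  let w : ∀ a b, K₂.Walk a b := fun a b => (hK₂.preconnected a b).some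
  let L₂ := hacts₂.walkHull H Q w
  obtain ⟨M, hM⟩ : ∃ M : ℕ, ∀ q ∈ Q, (w q.1 q.2).length ≤ M :=
    (hQ.image fun q => (w q.1 q.2).length).bddAbove.imp fun _ hM q hq => hM ⟨q, hq, rfl⟩
  have hpair := fun ξ η (hξη : LiftRel L₁ Λ ξ η) => hacts₂.exists_walkHull_edist_le hM hQcov hξη
  choose lift hlift using hΛne
  let Φ : L₁.verts → L₂.verts := fun v =>
    ⟨lift v v.2, (hpair _ _ ⟨v, v.2, v, Or.inl rfl, hlift v v.2, hlift v v.2⟩).1⟩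
  have hΦ : ∀ a b, L₁.coe.Adj a b → L₂.coe.edist (Φ a) (Φ b) ≤ M := fun a b hab =>
    (hpair _ _ ⟨a, a.2, b, Or.inr hab, hlift a a.2, hlift b b.2⟩).2.2
  have hnear : ∀ u, ∃ v, L₂.coe.edist u (Φ v) ≤ ↑(2 * M) := by
    intro u
    obtain ⟨h, hh, q, hq, h₁, hu⟩ := hacts₂.exists_walkHull_edist_le_of_mem hM u
    obtain ⟨v, hv, -, -, hq₁, -⟩ := hQrel q hq
    have hv' : φ₁ h v ∈ L₁.verts := (hinv h hh).1 v hv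
    obtain ⟨_, _, hξ⟩ := hpair _ _ ⟨_, hv', _, Or.inl rfl, hΛ h hh v _ hq₁, hlift _ hv'⟩
    refine ⟨⟨φ₁ h v, hv'⟩, ?_⟩
    calc L₂.coe.edist u (Φ ⟨φ₁ h v, hv'⟩)
        ≤ L₂.coe.edist u ⟨φ₂ h q.1, h₁⟩ + L₂.coe.edist ⟨φ₂ h q.1, h₁⟩ (Φ ⟨φ₁ h v, hv'⟩) :=
          L₂.coe.edist_triangle
      _ ≤ ↑(2 * M) := by push_cast; rw [two_mul]; gcongr
  have hbounds := edist_bounds_of_quasiInverse hK₂ hL₁ Φ ψ hΦ hnear hψ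
    fun v => hψΛ v _ (hlift v v.2)
  obtain ⟨x₀⟩ := hL₁.nonempty
  have : Nonempty L₂.verts := ⟨Φ x₀⟩
  have hL₂ : L₂.coe.Connected :=
    hL₁.of_edist_le fun u w => (hbounds u w).imp fun _ => .imp fun _ => And.left
  exact ⟨L₂, ⟨_, (Φ x₀).2⟩, hL₂, hacts₂.isInvariantSubgraph_orbitHull,
    hacts₂.hasFiniteOrbits_walkHull hQ, exists_qi_constants hK₁ hK₂ hL₁ hL₂ hl₁ he₁ hqi hbounds⟩

end Transfer

/-- Relative quasiconvexity (Definition Q-0) is independent of the choice of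
`(G,Ps)`-graph. -/
theorem qc0_independent_of_graph {V₁ : Type u} {V₂ : Type*} [Group G]
    (φ₁ : G →* Equiv.Perm V₁) (φ₂ : G →* Equiv.Perm V₂)
    (Ps : Set (Subgroup G)) (K₁ : SimpleGraph V₁) (K₂ : SimpleGraph V₂)
    (hK₁ : IsGPGraph φ₁ Ps K₁) (hK₂ : IsGPGraph φ₂ Ps K₂)
    (H : Subgroup G) (h₁ : QC0 φ₁ K₁ H) :
    QC0 φ₂ K₂ H := by
  obtain ⟨L₁, -, hL₁, hinv, horb, l₁, e₁, hl₁, he₁, hqi⟩ := h₁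
  obtain ⟨ψ, hψ⟩ := exists_coarselyEquivariant hK₁.conn hK₁.acts (hK₂.stabsHaveFiniteOrbits hK₁)
  obtain ⟨C, hC⟩ := hψ.exists_edist_le_of_adj hK₁.conn hK₁.acts hK₂.finOrbits
  obtain ⟨R, hR, -, hcov⟩ := exists_finite_orbit_cover hL₁ hinv horb
  choose y hy using hK₁.stabsHaveFiniteOrbits hK₂
  obtain ⟨C', hC'⟩ := hψ.exists_edist_le_of_mem_lifts (H := H) (y := y) hK₁.conn hK₁.acts hR
  refine qc0_of_quasiInverse hK₁.conn hK₂.conn hK₂.acts hL₁ hinv horb (by linarith) he₁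
    (fun a b => (hqi a b).2) (lifts φ₁ φ₂ H R y) (fun g hg v ξ => apply_mem_lifts hg)
    (lifts_finite hR hy) (fun v hv => ?_) ψ hC hC'
  obtain ⟨h, hh, r, hr, rfl⟩ := hcov v hv
  exact ⟨_, h, hh, r, hr, rfl, rfl⟩
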